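/- arXiv:1206.5072 — 5 statements merged into one kernel-verified Lean document; each statement's English description precedes it below -/
import Mathlib

section
/- Under these hypotheses, for every v ∈ ℝ^m one has A v = w if and only if v = V (P2ᵀ v) + v0; moreover for every q ∈ ℝ^{m−p} one has A (V q + v0) = w and P2ᵀ (V q + v0) = q (so q ↦ V q + v0 is a bijection from ℝ^{m−p} onto the solution set of A v = w, with inverse v ↦ P2ᵀ v). -/
open Matrix

lemma perm_orth {n : ℕ} (e : Equiv.Perm (Fin n)) :
    (e.permMatrix ℝ)ᵀ * (e.permMatrix ℝ) = 1 := by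
  rw [Equiv.Perm.permMatrix, ← PEquiv.toMatrix_symm, ← PEquiv.toMatrix_trans,
    ← Equiv.toPEquiv_symm, ← Equiv.toPEquiv_trans]
  simp

lemma sum_split {m p : ℕ} (hpm : p ≤ m) (f : Fin m → ℝ) :
    ∑ k, f k = (∑ i : Fin p, f (Fin.castLE hpm i)) +
      ∑ j : Fin (m - p), f ⟨p + (j : ℕ), by have := j.isLt; omega⟩ := by
  rw [← ((finSumFinEquiv.trans (finCongr (by omega : p + (m - p) = m))).sum_comp f),
    Fintype.sum_sum_type]
  congr 1


/-- The `s × m` block matrix `[[R1, R2], [0, 0]]` appearing in the rank-revealing QR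
factorization `A·P = Q·[[R1, R2],[0, 0]]`, where `R1` is `p × p` and `R2` is `p × (m−p)`. -/
def qrBlock (s m p : ℕ) (hpm : p ≤ m) (R1 : Matrix (Fin p) (Fin p) ℝ)
    (R2 : Matrix (Fin p) (Fin (m - p)) ℝ) : Matrix (Fin s) (Fin m) ℝ :=
  fun i j =>
    if hi : (i : ℕ) < p then
      if hj : (j : ℕ) < p then R1 ⟨i, hi⟩ ⟨j, hj⟩
      else R2 ⟨i, hi⟩ ⟨(j : ℕ) - p, by have := j.isLt; omega⟩
    else 0

/-- Given a rank-revealing QR factorization `A·P = Q·[[R1,R2],[0,0]]` with `P = [P1, P2]` a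
permutation matrix, `Q = [Q1, Q2]` orthogonal, `R1` invertible upper triangular, and
`Q2ᵀ w = 0`, set `V = P2 − P1 R1⁻¹ R2` and `v0 = P1 R1⁻¹ Q1ᵀ w`.  Then `A v = w` iff
`v = V (P2ᵀ v) + v0`, and moreover `A (V q + v0) = w` and `P2ᵀ (V q + v0) = q` for every `q`:
the map `q ↦ V q + v0` is a bijection from `ℝ^{m−p}` onto the solution set of `A v = w`,
with inverse `v ↦ P2ᵀ v`. -/
theorem free_flux_parametrization (s m p : ℕ) (hps : p ≤ s) (hpm : p ≤ m)
    (A : Matrix (Fin s) (Fin m) ℝ)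
    (P : Matrix (Fin m) (Fin m) ℝ) (hP : ∃ e : Equiv.Perm (Fin m), P = e.permMatrix ℝ)
    (Q : Matrix (Fin s) (Fin s) ℝ) (hQ : Qᵀ * Q = 1)
    (R1 : Matrix (Fin p) (Fin p) ℝ)
    (hR1tri : ∀ i j : Fin p, (j : ℕ) < (i : ℕ) → R1 i j = 0)
    (hR1inv : IsUnit R1.det)
    (R2 : Matrix (Fin p) (Fin (m - p)) ℝ)
    (hfact : A * P = Q * qrBlock s m p hpm R1 R2)
    (w : Fin s → ℝ)
    -- the blocks `P1, P2, Q1, Q2` of `P` and `Q`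
    (P1 : Matrix (Fin m) (Fin p) ℝ) (hP1 : P1 = P.submatrix id (Fin.castLE hpm))
    (P2 : Matrix (Fin m) (Fin (m - p)) ℝ)
    (hP2 : P2 = P.submatrix id (fun j : Fin (m - p) => (⟨p + (j : ℕ), by have := j.isLt; omega⟩ : Fin m)))
    (Q1 : Matrix (Fin s) (Fin p) ℝ) (hQ1 : Q1 = Q.submatrix id (Fin.castLE hps))
    (Q2 : Matrix (Fin s) (Fin (s - p)) ℝ)
    (hQ2 : Q2 = Q.submatrix id (fun j : Fin (s - p) => (⟨p + (j : ℕ), by have := j.isLt; omega⟩ : Fin s)))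
    (hw : Q2ᵀ.mulVec w = 0)
    -- the parametrization data
    (V : Matrix (Fin m) (Fin (m - p)) ℝ) (hV : V = P2 - P1 * R1⁻¹ * R2)
    (v0 : Fin m → ℝ) (hv0 : v0 = (P1 * R1⁻¹ * Q1ᵀ).mulVec w) :
    (∀ v : Fin m → ℝ, A.mulVec v = w ↔ v = V.mulVec (P2ᵀ.mulVec v) + v0) ∧
    (∀ q : Fin (m - p) → ℝ,
      A.mulVec (V.mulVec q + v0) = w ∧ P2ᵀ.mulVec (V.mulVec q + v0) = q) := by
  obtain ⟨e, hPe⟩ := hP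
  have hPP : Pᵀ * P = 1 := by rw [hPe]; exact perm_orth e
  have hPPT : P * Pᵀ = 1 := mul_eq_one_comm.mp hPP
  have hQQT : Q * Qᵀ = 1 := mul_eq_one_comm.mp hQ
  -- block identities for P
  have hP1tP1 : P1ᵀ * P1 = 1 := by
    ext i j
    have h := congrFun (congrFun hPP (Fin.castLE hpm i)) (Fin.castLE hpm j)
    simp only [mul_apply, transpose_apply, one_apply, Fin.castLE_inj] at h ⊢
    simpa [hP1] using h
  have hP1tP2 : P1ᵀ * P2 = 0 := by
    ext i j
    have h := congrFun (congrFun hPP (Fin.castLE hpm i))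
      ⟨p + (j : ℕ), by have := j.isLt; omega⟩
    have hne : Fin.castLE hpm i ≠ (⟨p + (j : ℕ), by have := j.isLt; omega⟩ : Fin m) := by
      apply Fin.ne_of_val_ne; simp only [Fin.coe_castLE]; have := i.isLt; omega
    simp only [mul_apply, transpose_apply, one_apply, hne, if_neg hne] at h
    simpa [hP1, hP2, mul_apply] using h
  have hP2tP1 : P2ᵀ * P1 = 0 := by
    have := congrArg transpose hP1tP2
    simpa [transpose_mul] using this
  have hP2tP2 : P2ᵀ * P2 = 1 := by
    ext i j
    have h := congrFun (congrFun hPP ⟨p + (i : ℕ), by have := i.isLt; omega⟩)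
      ⟨p + (j : ℕ), by have := j.isLt; omega⟩
    have : ((⟨p + (i : ℕ), by have := i.isLt; omega⟩ : Fin m) =
        ⟨p + (j : ℕ), by have := j.isLt; omega⟩) ↔ i = j := by
      simp [Fin.ext_iff]
    simp only [mul_apply, transpose_apply, one_apply, this] at h
    simpa [hP2, mul_apply, one_apply] using h
  have hPsum : P1 * P1ᵀ + P2 * P2ᵀ = 1 := by
    ext i j
    have h := congrFun (congrFun hPPT i) j
    simp only [mul_apply, transpose_apply] at h
    rw [sum_split hpm (fun k => P i k * P j k)] at h
    simpa [hP1, hP2, mul_apply, Matrix.add_apply] using h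
  -- block identities for Q
  have hQ1tQ1 : Q1ᵀ * Q1 = 1 := by
    ext i j
    have h := congrFun (congrFun hQ (Fin.castLE hps i)) (Fin.castLE hps j)
    simp only [mul_apply, transpose_apply, one_apply, Fin.castLE_inj] at h ⊢
    simpa [hQ1] using h
  have hQsum : Q1 * Q1ᵀ + Q2 * Q2ᵀ = 1 := by
    ext i j
    have h := congrFun (congrFun hQQT i) j
    simp only [mul_apply, transpose_apply] at h
    rw [sum_split hps (fun k => Q i k * Q j k)] at h
    simpa [hQ1, hQ2, mul_apply, Matrix.add_apply] using h
  -- the factorization of A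
  have hA : A = Q1 * (R1 * P1ᵀ + R2 * P2ᵀ) := by
    have h1 : A = Q * qrBlock s m p hpm R1 R2 * Pᵀ := by
      rw [← hfact, Matrix.mul_assoc, hPPT, Matrix.mul_one]
    have h2 : Q * qrBlock s m p hpm R1 R2 =
        Q1 * (qrBlock s m p hpm R1 R2).submatrix (Fin.castLE hps) id := by
      ext i j
      rw [mul_apply, sum_split hps (fun k => Q i k * qrBlock s m p hpm R1 R2 k j)]
      have hz : ∀ k : Fin (s - p),
          Q i ⟨p + (k : ℕ), by have := k.isLt; omega⟩ *
            qrBlock s m p hpm R1 R2 ⟨p + (k : ℕ), by have := k.isLt; omega⟩ j = 0 := by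
        intro k
        have : ¬ ((p : ℕ) + (k : ℕ) < p) := by omega
        simp [qrBlock, this]
      simp only [hz, Finset.sum_const_zero, add_zero]
      simp [hQ1, mul_apply]
    have h3 : (qrBlock s m p hpm R1 R2).submatrix (Fin.castLE hps) id * Pᵀ =
        R1 * P1ᵀ + R2 * P2ᵀ := by
      ext i j
      rw [mul_apply, sum_split hpm
        (fun k => (qrBlock s m p hpm R1 R2).submatrix (Fin.castLE hps) id i k * Pᵀ k j)]
      have e1 : ∀ k : Fin p,
          (qrBlock s m p hpm R1 R2).submatrix (Fin.castLE hps) id i (Fin.castLE hpm k) *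
            Pᵀ (Fin.castLE hpm k) j = R1 i k * P1 j k := by
        intro k
        have hi : ((Fin.castLE hps i : Fin s) : ℕ) < p := i.isLt
        have hk : ((Fin.castLE hpm k : Fin m) : ℕ) < p := k.isLt
        simp [qrBlock, hi, hk, hP1]
      have e2 : ∀ k : Fin (m - p),
          (qrBlock s m p hpm R1 R2).submatrix (Fin.castLE hps) id i
              ⟨p + (k : ℕ), by have := k.isLt; omega⟩ *
            Pᵀ ⟨p + (k : ℕ), by have := k.isLt; omega⟩ j = R2 i k * P2 j k := by
        intro k
        have hi : ((Fin.castLE hps i : Fin s) : ℕ) < p := i.isLt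
        have hk : ¬ ((p : ℕ) + (k : ℕ) < p) := by omega
        simp [qrBlock, hi, hk, hP2]
      simp only [Finset.sum_congr rfl (fun k _ => e1 k),
        Finset.sum_congr rfl (fun k _ => e2 k)]
      simp [mul_apply, Matrix.add_apply]
    rw [h1, h2, Matrix.mul_assoc, h3]
  -- inverse facts for R1
  have hR1r : R1 * R1⁻¹ = 1 := mul_nonsing_inv R1 hR1inv
  have hR1l : R1⁻¹ * R1 = 1 := nonsing_inv_mul R1 hR1inv
  have hMP2 : (R1 * P1ᵀ + R2 * P2ᵀ) * P2 = R2 := by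
    rw [Matrix.add_mul, Matrix.mul_assoc, Matrix.mul_assoc, hP1tP2, hP2tP2,
      Matrix.mul_zero, Matrix.mul_one, zero_add]
  have hMP1 : (R1 * P1ᵀ + R2 * P2ᵀ) * P1 = R1 := by
    rw [Matrix.add_mul, Matrix.mul_assoc, Matrix.mul_assoc, hP1tP1, hP2tP1,
      Matrix.mul_zero, Matrix.mul_one, add_zero]
  have hMV : (R1 * P1ᵀ + R2 * P2ᵀ) * (P2 - P1 * R1⁻¹ * R2) = 0 := by
    rw [Matrix.mul_sub, hMP2, Matrix.mul_assoc P1 R1⁻¹ R2,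
      ← Matrix.mul_assoc _ P1 (R1⁻¹ * R2), hMP1, ← Matrix.mul_assoc R1 R1⁻¹ R2,
      hR1r, Matrix.one_mul, sub_self]
  have hAV : A * V = 0 := by
    rw [hA, hV, Matrix.mul_assoc, hMV, Matrix.mul_zero]
  have hAv0M : A * (P1 * R1⁻¹ * Q1ᵀ) = Q1 * Q1ᵀ := by
    rw [hA, Matrix.mul_assoc, Matrix.mul_assoc P1 R1⁻¹ Q1ᵀ,
      ← Matrix.mul_assoc _ P1 (R1⁻¹ * Q1ᵀ), hMP1, ← Matrix.mul_assoc R1 R1⁻¹ Q1ᵀ,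
      hR1r, Matrix.one_mul]
  have hQ1Q1w : (Q1 * Q1ᵀ).mulVec w = w := by
    have h := congrArg (fun M => Matrix.mulVec M w) hQsum
    simp only [Matrix.add_mulVec, Matrix.one_mulVec] at h
    have h2 : (Q2 * Q2ᵀ).mulVec w = 0 := by
      rw [← Matrix.mulVec_mulVec, hw, Matrix.mulVec_zero]
    rw [h2, add_zero] at h
    exact h
  have hAv0 : A.mulVec v0 = w := by
    rw [hv0, Matrix.mulVec_mulVec, hAv0M]
    exact hQ1Q1w
  have hP2tV : P2ᵀ * V = 1 := by
    rw [hV, Matrix.mul_sub, hP2tP2, Matrix.mul_assoc P1 R1⁻¹ R2,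
      ← Matrix.mul_assoc P2ᵀ P1 (R1⁻¹ * R2), hP2tP1, Matrix.zero_mul, sub_zero]
  have hP2tv0 : P2ᵀ.mulVec v0 = 0 := by
    rw [hv0, Matrix.mulVec_mulVec, Matrix.mul_assoc P1 R1⁻¹ Q1ᵀ,
      ← Matrix.mul_assoc P2ᵀ P1 (R1⁻¹ * Q1ᵀ), hP2tP1, Matrix.zero_mul,
      Matrix.zero_mulVec]
  have part2a : ∀ q, A.mulVec (V.mulVec q + v0) = w := by
    intro q
    rw [Matrix.mulVec_add, Matrix.mulVec_mulVec, hAV, Matrix.zero_mulVec, zero_add, hAv0]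
  have part2b : ∀ q, P2ᵀ.mulVec (V.mulVec q + v0) = q := by
    intro q
    rw [Matrix.mulVec_add, Matrix.mulVec_mulVec, hP2tV, Matrix.one_mulVec, hP2tv0, add_zero]
  refine ⟨fun v => ⟨fun hv => ?_, fun hv => ?_⟩, fun q => ⟨part2a q, part2b q⟩⟩
  · -- forward direction
    have hv2 : Q1.mulVec ((R1 * P1ᵀ + R2 * P2ᵀ).mulVec v) = w := by
      rw [Matrix.mulVec_mulVec, ← hA]
      exact hv
    have h1 : R1.mulVec (P1ᵀ.mulVec v) + R2.mulVec (P2ᵀ.mulVec v) = Q1ᵀ.mulVec w := by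
      have h := congrArg (fun x => Matrix.mulVec Q1ᵀ x) hv2
      simp only [Matrix.mulVec_mulVec] at h
      rw [← Matrix.mul_assoc, hQ1tQ1, Matrix.one_mul] at h
      rw [← h, Matrix.add_mulVec, ← Matrix.mulVec_mulVec, ← Matrix.mulVec_mulVec]
    have h3 : R1.mulVec (P1ᵀ.mulVec v) = Q1ᵀ.mulVec w - R2.mulVec (P2ᵀ.mulVec v) :=
      eq_sub_of_add_eq h1
    have h2 : P1ᵀ.mulVec v =
        R1⁻¹.mulVec (Q1ᵀ.mulVec w) - R1⁻¹.mulVec (R2.mulVec (P2ᵀ.mulVec v)) := by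
      have h := congrArg (fun x => Matrix.mulVec R1⁻¹ x) h3
      rw [Matrix.mulVec_mulVec, hR1l, Matrix.one_mulVec, Matrix.mulVec_sub] at h
      exact h
    have hvdecomp : v = P1.mulVec (P1ᵀ.mulVec v) + P2.mulVec (P2ᵀ.mulVec v) := by
      conv_lhs => rw [← Matrix.one_mulVec v, ← hPsum]
      rw [Matrix.add_mulVec, Matrix.mulVec_mulVec, Matrix.mulVec_mulVec]
    rw [hV, hv0, Matrix.sub_mulVec]
    simp only [← Matrix.mulVec_mulVec]
    conv_lhs => rw [hvdecomp]
    rw [h2, Matrix.mulVec_sub]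
    abel
  · -- reverse direction
    conv_lhs => rw [hv]
    exact part2a _
end

section
/- Under these hypotheses, ⟨σ⁻²(C x_T − y^meas), C s(T)⟩ = −∫₀ᵀ ⟨p(t), g(t)⟩ dt; consequently the directional derivative of the terminal-time Chi-Square cost along the sensitivity s can be computed from the adjoint state p alone. -/
open Matrix

/-- The adjoint method computes the directional derivative of the terminal-time Chi-Square
cost: if `s` solves the sensitivity equation `X s'(t) = A s(t) + g(t)`, `s(0) = 0`, and `p`
solves the adjoint equation `X p'(t) = −Aᵀ p(t)` with final condition
`X p(T) = −Cᵀ σ⁻² (C x_T − y^meas)`, then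
`⟨σ⁻²(C x_T − y^meas), C s(T)⟩ = −∫₀ᵀ ⟨p(t), g(t)⟩ dt`. -/
theorem adjoint_method_chi_square_directional_derivative
    (n r : ℕ) (hn : 1 ≤ n) (hr : 1 ≤ r) (T : ℝ) (hT : 0 < T)
    (X : Matrix (Fin n) (Fin n) ℝ) (hX : Xᵀ = X)
    (A : Matrix (Fin n) (Fin n) ℝ)
    (C : Matrix (Fin r) (Fin n) ℝ)
    (σ : Fin r → ℝ) (hσ : ∀ i, 0 < σ i)
    (xT : Fin n → ℝ) (ymeas : Fin r → ℝ)
    (g : ℝ → Fin n → ℝ) (hg : ContinuousOn g (Set.Icc 0 T))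
    (s p : ℝ → Fin n → ℝ) (s' p' : ℝ → Fin n → ℝ)
    (hs : ∀ t ∈ Set.Icc (0:ℝ) T, HasDerivAt s (s' t) t)
    (hp : ∀ t ∈ Set.Icc (0:ℝ) T, HasDerivAt p (p' t) t)
    (hsens : ∀ t ∈ Set.Icc (0:ℝ) T, X.mulVec (s' t) = A.mulVec (s t) + g t)
    (hs0 : s 0 = 0)
    (hadj : ∀ t ∈ Set.Icc (0:ℝ) T, X.mulVec (p' t) = -Aᵀ.mulVec (p t))
    (hfinal : X.mulVec (p T) =
      -Cᵀ.mulVec ((Matrix.diagonal fun i => (σ i)⁻¹ ^ 2).mulVec (C.mulVec xT - ymeas))) :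
    ∑ i, ((Matrix.diagonal fun i => (σ i)⁻¹ ^ 2).mulVec (C.mulVec xT - ymeas)) i *
        C.mulVec (s T) i =
      -∫ t in (0:ℝ)..T, ∑ i, p t i * g t i := by
  set w : Fin r → ℝ := (Matrix.diagonal fun i => (σ i)⁻¹ ^ 2).mulVec (C.mulVec xT - ymeas) with hw
  have huIcc : Set.uIcc (0:ℝ) T = Set.Icc 0 T := Set.uIcc_of_le hT.le
  -- derivative of F t = p t ⬝ᵥ X.mulVec (s t)
  have hdF : ∀ t ∈ Set.uIcc (0:ℝ) T,
      HasDerivAt (fun τ => p τ ⬝ᵥ X.mulVec (s τ)) (∑ i, p t i * g t i) t := by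
    rw [huIcc]
    intro t ht
    have hpi : ∀ i, HasDerivAt (fun τ => p τ i) (p' t i) t :=
      hasDerivAt_pi.mp (hp t ht)
    have hsi : ∀ i, HasDerivAt (fun τ => s τ i) (s' t i) t :=
      hasDerivAt_pi.mp (hs t ht)
    have h : HasDerivAt (fun τ => ∑ i, ∑ j, p τ i * (X i j * s τ j))
        (∑ i, ∑ j, (p' t i * (X i j * s t j) + p t i * (X i j * s' t j))) t := by
      apply HasDerivAt.fun_sum
      intro i _
      apply HasDerivAt.fun_sum
      intro j _
      exact (hpi i).mul ((hsi j).const_mul (X i j))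
    have hfun : (fun τ => p τ ⬝ᵥ X.mulVec (s τ)) =
        fun τ => ∑ i, ∑ j, p τ i * (X i j * s τ j) := by
      funext τ
      simp [dotProduct, mulVec, Finset.mul_sum]
    have hval : (∑ i, ∑ j, (p' t i * (X i j * s t j) + p t i * (X i j * s' t j)))
        = ∑ i, p t i * g t i := by
      have e1 : (∑ i, ∑ j, p' t i * (X i j * s t j)) = p' t ⬝ᵥ X.mulVec (s t) := by
        simp [dotProduct, mulVec, Finset.mul_sum]
      have e2 : (∑ i, ∑ j, p t i * (X i j * s' t j)) = p t ⬝ᵥ X.mulVec (s' t) := by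
        simp [dotProduct, mulVec, Finset.mul_sum]
      have e3 : p' t ⬝ᵥ X.mulVec (s t) = X.mulVec (p' t) ⬝ᵥ s t := by
        rw [dotProduct_mulVec, ← Matrix.mulVec_transpose, hX]
      have e4 : Aᵀ.mulVec (p t) ⬝ᵥ s t = p t ⬝ᵥ A.mulVec (s t) := by
        rw [dotProduct_mulVec, ← Matrix.mulVec_transpose]
      simp only [Finset.sum_add_distrib]
      rw [e1, e2, e3, hadj t ht, hsens t ht]
      simp [dotProduct_add, neg_dotProduct, e4]
      rfl
    rw [hfun, ← hval]
    exact h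
  have hcontp : ContinuousOn p (Set.Icc 0 T) := fun t ht =>
    (hp t ht).continuousAt.continuousWithinAt
  have hint : IntervalIntegrable (fun t => ∑ i, p t i * g t i) MeasureTheory.volume 0 T := by
    apply ContinuousOn.intervalIntegrable
    rw [huIcc]
    apply continuousOn_finset_sum
    intro i _
    exact ((continuous_apply i).comp_continuousOn hcontp).mul
      ((continuous_apply i).comp_continuousOn hg)
  have hFTC : (∫ t in (0:ℝ)..T, ∑ i, p t i * g t i)
      = p T ⬝ᵥ X.mulVec (s T) - p 0 ⬝ᵥ X.mulVec (s 0) :=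
    intervalIntegral.integral_eq_sub_of_hasDerivAt hdF hint
  rw [hs0] at hFTC
  simp only [Matrix.mulVec_zero, dotProduct_zero, sub_zero] at hFTC
  have hkey : p T ⬝ᵥ X.mulVec (s T) = -(w ⬝ᵥ C.mulVec (s T)) := by
    rw [dotProduct_mulVec, ← Matrix.mulVec_transpose, hX, hfinal]
    rw [neg_dotProduct, dotProduct_mulVec, ← Matrix.mulVec_transpose]
  have : (∑ i, w i * C.mulVec (s T) i) = w ⬝ᵥ C.mulVec (s T) := rfl
  rw [this, hFTC, hkey, neg_neg]
end

section
/- Under these hypotheses, ∑_{i=2}^{N} ⟨c^i, s^i⟩ = −∑_{i=1}^{N−1} ⟨p^i, g^i⟩, where ⟨·,·⟩ is the Euclidean inner product on ℝ^n. (This is the discrete adjoint identity: the discrete adjoint of the implicit trapezoidal scheme computes the pairing of the sensitivities with the cost derivatives.) -/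
open Matrix

lemma tele_aux (F : ℕ → ℝ) : ∀ M : ℕ,
    ∑ i ∈ Finset.Icc 2 (M + 1), (F i - F (i - 1)) = F (M + 1) - F 1 := by
  intro M
  induction M with
  | zero => simp
  | succ M ih =>
      rw [show M + 1 + 1 = M + 2 by ring,
        show Finset.Icc 2 (M + 2) = insert (M + 2) (Finset.Icc 2 (M + 1)) by
          ext x; simp [Finset.mem_Icc]; omega,
        Finset.sum_insert (by simp)]
      simp only [show M + 2 - 1 = M + 1 by omega, ih]
      ring

/-- The discrete adjoint identity for the implicit trapezoidal scheme: if `s¹ = 0`,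
`(D − (h/2)A) s^{i+1} = (D + (h/2)A) s^i + g^i` for `i = 1,…,N−1`,
`(Dᵀ − (h/2)Aᵀ) p^{i−1} = (Dᵀ + (h/2)Aᵀ) p^i − c^i` for `i = 2,…,N−1`, and
`(Dᵀ − (h/2)Aᵀ) p^{N−1} = −c^N`, then
`∑_{i=2}^{N} ⟨c^i, s^i⟩ = −∑_{i=1}^{N−1} ⟨p^i, g^i⟩`. -/
theorem discrete_trapezoidal_adjoint_identity
    (n N : ℕ) (hn : 1 ≤ n) (hN : 2 ≤ N) (h : ℝ) (hh : 0 < h)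
    (D A : Matrix (Fin n) (Fin n) ℝ)
    (s : ℕ → Fin n → ℝ) (g : ℕ → Fin n → ℝ)
    (c : ℕ → Fin n → ℝ) (p : ℕ → Fin n → ℝ)
    (hs1 : s 1 = 0)
    (hforward : ∀ i, 1 ≤ i → i ≤ N - 1 →
      (D - (h / 2) • A).mulVec (s (i + 1)) = (D + (h / 2) • A).mulVec (s i) + g i)
    (hbackward : ∀ i, 2 ≤ i → i ≤ N - 1 →
      (Dᵀ - (h / 2) • Aᵀ).mulVec (p (i - 1)) = (Dᵀ + (h / 2) • Aᵀ).mulVec (p i) - c i)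
    (hfinal : (Dᵀ - (h / 2) • Aᵀ).mulVec (p (N - 1)) = -c N) :
    ∑ i ∈ Finset.Icc 2 N, ∑ k, c i k * s i k =
      -∑ i ∈ Finset.Icc 1 (N - 1), ∑ k, p i k * g i k := by
  obtain ⟨M, rfl⟩ : ∃ M, N = M + 2 := ⟨N - 2, by omega⟩
  set B := D - (h / 2) • A with hB
  set C := D + (h / 2) • A with hC
  have hBt : Dᵀ - (h / 2) • Aᵀ = Bᵀ := by rw [hB]; simp [Matrix.transpose_sub]
  have hCt : Dᵀ + (h / 2) • Aᵀ = Cᵀ := by rw [hC]; simp [Matrix.transpose_add]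
  rw [hBt] at hbackward hfinal
  rw [hCt] at hbackward
  -- key transpose pairing
  have key : ∀ (Q : Matrix (Fin n) (Fin n) ℝ) (u v : Fin n → ℝ),
      Qᵀ.mulVec u ⬝ᵥ v = u ⬝ᵥ Q.mulVec v := by
    intro Q u v
    rw [Matrix.mulVec_transpose, ← Matrix.dotProduct_mulVec]
  set F : ℕ → ℝ := fun j => p j ⬝ᵥ B.mulVec (s (j + 1)) with hF
  set G : ℕ → ℝ := fun j => p j ⬝ᵥ g j with hG
  have hsum : ∀ i, ∑ k, c i k * s i k = c i ⬝ᵥ s i := fun i => rfl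
  have hpg : ∀ i, ∑ k, p i k * g i k = G i := fun i => rfl
  have claimA : ∀ i, 2 ≤ i → i ≤ M + 1 → c i ⬝ᵥ s i = (F i - F (i - 1)) - G i := by
    intro i h2 hle
    have hc : c i = Cᵀ.mulVec (p i) - Bᵀ.mulVec (p (i - 1)) := by
      have := hbackward i h2 (by omega)
      rw [this]; abel
    have hf := hforward i (by omega) (by omega)
    have hCs : C.mulVec (s i) = B.mulVec (s (i + 1)) - g i := by
      rw [hf]; abel
    rw [hc, sub_dotProduct, key, key, hCs, dotProduct_sub]
    have : i - 1 + 1 = i := by omega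
    simp only [hF, hG, this]
    ring
  have claimB : c (M + 2) ⬝ᵥ s (M + 2) = -F (M + 1) := by
    have hc : c (M + 2) = -(Bᵀ.mulVec (p (M + 2 - 1))) := by
      rw [hfinal, neg_neg]
    rw [hc, neg_dotProduct, key]
    simp only [hF, show M + 2 - 1 = M + 1 by omega]
  have claimC : F 1 = G 1 := by
    have hf := hforward 1 le_rfl (by omega)
    simp only [hF, hG, hf, hs1, Matrix.mulVec_zero, zero_add]
  -- split off the last term of LHS
  have hsplit : Finset.Icc 2 (M + 2) = insert (M + 2) (Finset.Icc 2 (M + 1)) := by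
    ext x; simp [Finset.mem_Icc]; omega
  have hsplit2 : Finset.Icc 1 (M + 2 - 1) = insert 1 (Finset.Icc 2 (M + 1)) := by
    rw [show M + 2 - 1 = M + 1 by omega]
    ext x; simp; omega
  rw [hsplit, Finset.sum_insert (by simp), hsplit2, Finset.sum_insert (by simp)]
  simp only [hsum, hpg]
  rw [claimB]
  have : ∑ i ∈ Finset.Icc 2 (M + 1), c i ⬝ᵥ s i
      = ∑ i ∈ Finset.Icc 2 (M + 1), ((F i - F (i - 1)) - G i) := by
    apply Finset.sum_congr rfl
    intro i hi
    simp only [Finset.mem_Icc] at hi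
    exact claimA i hi.1 hi.2
  rw [this, Finset.sum_sub_distrib, tele_aux, claimC]
  ring
end

section
/- Under these hypotheses, for every v ∈ ℝ^m, every direction w ∈ ℝ^m and every i = 1,…,N−1, the directional derivatives s^i := D x^i(v) w satisfy s^1 = 0 and the recursion (X − (h/2)M(v)) s^{i+1} = (X + (h/2)M(v)) s^i + (h/2)[(D M(v) w)·x^{i+1}(v) + (D M(v) w)·x^i(v) + 2 (D b(v) w)], where D M(v) w and D b(v) w denote the directional Fréchet derivatives of M and b at v in the direction w. -/
open Matrix

lemma comp_proj_fderiv {m n : ℕ} (f : (Fin m → ℝ) → Fin n → ℝ) (hf : Differentiable ℝ f)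
    (v : Fin m → ℝ) (j : Fin n) :
    HasFDerivAt (fun u => f u j)
      ((ContinuousLinearMap.proj j : (Fin n → ℝ) →L[ℝ] ℝ).comp (fderiv ℝ f v)) v := by
  have := ((ContinuousLinearMap.proj j : (Fin n → ℝ) →L[ℝ] ℝ).hasFDerivAt
    (x := f v)).comp v (hf v).hasFDerivAt
  exact this

/-- Differentiating the implicit trapezoidal scheme
`X (x^{i+1}(v) − x^i(v)) = (h/2)(f(x^{i+1}(v),v) + f(x^i(v),v))` with `f(x,v) = M(v)x + b(v)`:
the directional derivatives `s^i = D x^i(v) w` satisfy `s^1 = 0` and the forward recursion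
`(X − (h/2)M(v)) s^{i+1} = (X + (h/2)M(v)) s^i
  + (h/2)[(D M(v) w)·x^{i+1}(v) + (D M(v) w)·x^i(v) + 2 (D b(v) w)]`. -/
theorem trapezoidal_scheme_sensitivity_recursion
    (n m N : ℕ) (hn : 1 ≤ n) (hm : 1 ≤ m) (hN : 2 ≤ N) (h : ℝ) (hh : 0 < h)
    (X : Matrix (Fin n) (Fin n) ℝ)
    (M : (Fin m → ℝ) → Matrix (Fin n) (Fin n) ℝ)
    (hM : ∀ i j, Differentiable ℝ (fun v => M v i j))
    (b : (Fin m → ℝ) → Fin n → ℝ) (hb : Differentiable ℝ b)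
    (x : ℕ → (Fin m → ℝ) → Fin n → ℝ)
    (hx : ∀ i, Differentiable ℝ (x i))
    (hx1 : ∀ v v' : Fin m → ℝ, x 1 v = x 1 v')
    (hscheme : ∀ (v : Fin m → ℝ) (i : ℕ), 1 ≤ i → i ≤ N - 1 →
      X.mulVec (x (i + 1) v - x i v) =
        (h / 2) • ((M v).mulVec (x (i + 1) v) + b v + ((M v).mulVec (x i v) + b v)))
    (hinv : ∀ v : Fin m → ℝ, IsUnit (X - (h / 2) • M v).det) :
    ∀ (v w : Fin m → ℝ),
      fderiv ℝ (x 1) v w = 0 ∧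
      ∀ i : ℕ, 1 ≤ i → i ≤ N - 1 →
        (X - (h / 2) • M v).mulVec (fderiv ℝ (x (i + 1)) v w) =
          (X + (h / 2) • M v).mulVec (fderiv ℝ (x i) v w) +
            (h / 2) • ((Matrix.of fun a b' => fderiv ℝ (fun v' => M v' a b') v w).mulVec
                (x (i + 1) v)
              + (Matrix.of fun a b' => fderiv ℝ (fun v' => M v' a b') v w).mulVec (x i v)
              + (2 : ℝ) • fderiv ℝ b v w) := by
  intro v w
  constructor
  · have hc : x 1 = fun _ => x 1 v := funext fun u => hx1 u v
    rw [hc, fderiv_fun_const]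
    simp
  · intro i hi1 hi2
    -- component-wise derivatives
    funext a
    -- scalar functions
    have hFa : HasFDerivAt (fun u => ∑ j, X a j * (x (i + 1) u j - x i u j))
        (∑ j, X a j • (((ContinuousLinearMap.proj j : (Fin n → ℝ) →L[ℝ] ℝ).comp
            (fderiv ℝ (x (i + 1)) v)) -
          ((ContinuousLinearMap.proj j : (Fin n → ℝ) →L[ℝ] ℝ).comp (fderiv ℝ (x i) v)))) v :=
      HasFDerivAt.fun_sum fun j _ =>
        ((comp_proj_fderiv (x (i + 1)) (hx (i + 1)) v j).sub
          (comp_proj_fderiv (x i) (hx i) v j)).const_mul (X a j)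
    have hGa : HasFDerivAt (fun u =>
        (h / 2) * ((∑ j, M u a j * x (i + 1) u j) + b u a +
          ((∑ j, M u a j * x i u j) + b u a)))
        ((h / 2) • ((∑ j, ((M v a j) • ((ContinuousLinearMap.proj j : (Fin n → ℝ) →L[ℝ] ℝ).comp
              (fderiv ℝ (x (i + 1)) v)) + (x (i + 1) v j) • fderiv ℝ (fun u => M u a j) v)) +
            (ContinuousLinearMap.proj a : (Fin n → ℝ) →L[ℝ] ℝ).comp (fderiv ℝ b v) +
          ((∑ j, ((M v a j) • ((ContinuousLinearMap.proj j : (Fin n → ℝ) →L[ℝ] ℝ).comp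
              (fderiv ℝ (x i) v)) + (x i v j) • fderiv ℝ (fun u => M u a j) v)) +
            (ContinuousLinearMap.proj a : (Fin n → ℝ) →L[ℝ] ℝ).comp (fderiv ℝ b v)))) v := by
      refine HasFDerivAt.const_mul ?_ (h / 2)
      refine HasFDerivAt.add (HasFDerivAt.add ?_ ?_) (HasFDerivAt.add ?_ ?_)
      · exact HasFDerivAt.fun_sum fun j _ =>
          ((hM a j v).hasFDerivAt.mul (comp_proj_fderiv (x (i + 1)) (hx (i + 1)) v j))
      · exact comp_proj_fderiv b hb v a
      · exact HasFDerivAt.fun_sum fun j _ =>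
          ((hM a j v).hasFDerivAt.mul (comp_proj_fderiv (x i) (hx i) v j))
      · exact comp_proj_fderiv b hb v a
    -- the two functions are equal
    have heq : (fun u => ∑ j, X a j * (x (i + 1) u j - x i u j)) =
        (fun u => (h / 2) * ((∑ j, M u a j * x (i + 1) u j) + b u a +
          ((∑ j, M u a j * x i u j) + b u a))) := by
      funext u
      have := congrFun (hscheme u i hi1 hi2) a
      simpa [mulVec, dotProduct, Pi.sub_apply, Pi.add_apply, Pi.smul_apply, smul_eq_mul]
        using this
    have hGa' := heq ▸ hGa
    have hLL := hFa.unique hGa'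
    have hD := congrArg (fun L => L w) hLL
    simp only [ContinuousLinearMap.sum_apply, ContinuousLinearMap.smul_apply,
      ContinuousLinearMap.sub_apply, ContinuousLinearMap.add_apply,
      ContinuousLinearMap.coe_comp', Function.comp_apply, ContinuousLinearMap.proj_apply,
      smul_eq_mul] at hD
    -- now hD is the scalar identity; massage sums
    simp only [mul_sub, Finset.sum_sub_distrib, Finset.sum_add_distrib] at hD
    -- goal at coordinate a
    simp only [mulVec, dotProduct, Matrix.sub_apply, Matrix.add_apply, Matrix.smul_apply,
      Pi.add_apply, Pi.smul_apply, smul_eq_mul, Matrix.of_apply, sub_mul, add_mul,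
      Finset.sum_sub_distrib, Finset.sum_add_distrib, mul_assoc, ← Finset.mul_sum]
    simp only [mul_comm, mul_left_comm] at hD ⊢
    linear_combination hD
end

section
/- Under these hypotheses, J is differentiable at v and for every direction w ∈ ℝ^m its directional derivative is given by the adjoint formula D J(v) w = −(h/2) ∑_{i=1}^{N−1} ⟨p^i, (D M(v) w)·x^{i+1}(v) + (D M(v) w)·x^i(v) + 2 (D b(v) w)⟩, so the gradient of J is obtained from a single backward adjoint recursion instead of m forward sensitivity recursions. -/
open Matrix

/-- Pairing with a transposed matrix: `⟨Aᵀ p, s⟩ = ⟨p, A s⟩`. -/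
lemma adjoint_pair_aux {n : ℕ} (A : Matrix (Fin n) (Fin n) ℝ) (p s : Fin n → ℝ) :
    Aᵀ.mulVec p ⬝ᵥ s = p ⬝ᵥ A.mulVec s := by
  rw [Matrix.mulVec_transpose, Matrix.dotProduct_mulVec]

/-- Telescoping sum over an `Icc`. -/
lemma tele_sum_aux (f : ℕ → ℝ) (a b : ℕ) (hab : a ≤ b) :
    ∑ i ∈ Finset.Icc (a + 1) b, (f i - f (i - 1)) = f b - f a := by
  induction b with
  | zero =>
    have : a = 0 := by omega
    subst this
    simp
  | succ b ih =>
    rcases Nat.lt_or_ge a (b + 1) with hlt | hge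
    · rw [Finset.sum_Icc_succ_top (by omega), ih (by omega)]
      simp only [Nat.add_sub_cancel]
      ring
    · have : a = b + 1 := by omega
      subst this
      rw [Finset.Icc_eq_empty (by omega)]
      simp

/-- Index shift for a sum over an `Icc`. -/
lemma shift_sum_aux (g : ℕ → ℝ) (a b : ℕ) :
    ∑ i ∈ Finset.Icc (a + 1) (b + 1), g (i - 1) = ∑ i ∈ Finset.Icc a b, g i := by
  rw [← Finset.map_add_right_Icc a b 1, Finset.sum_map]
  simp

/-- The adjoint formula for the gradient of the discrete-time Chi-Square cost
`J(v) = ½ ∑_j ‖σ⁻¹(C x^{θ(j)}(v) − y^j)‖²`, where `x^i(v)` solves the implicit trapezoidal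
scheme: if `p^1,…,p^{N−1}` solve the backward adjoint recursion, then `J` is differentiable
at `v` and `D J(v) w = −(h/2) ∑_{i=1}^{N−1} ⟨p^i, (D M(v) w)x^{i+1}(v) + (D M(v) w)x^i(v)
+ 2 D b(v) w⟩`. -/
theorem adjoint_formula_discrete_gradient
    (n m r N nt : ℕ) (hn : 1 ≤ n) (hm : 1 ≤ m) (hr : 1 ≤ r) (hN : 2 ≤ N) (hnt : 1 ≤ nt)
    (h : ℝ) (hh : 0 < h)
    (X : Matrix (Fin n) (Fin n) ℝ) (hX : Xᵀ = X)
    (M : (Fin m → ℝ) → Matrix (Fin n) (Fin n) ℝ)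
    (hM : ∀ i j, Differentiable ℝ (fun v => M v i j))
    (b : (Fin m → ℝ) → Fin n → ℝ) (hb : Differentiable ℝ b)
    (x : ℕ → (Fin m → ℝ) → Fin n → ℝ)
    (hx : ∀ i, Differentiable ℝ (x i))
    (hx1 : ∀ v v' : Fin m → ℝ, x 1 v = x 1 v')
    (hscheme : ∀ (v : Fin m → ℝ) (i : ℕ), 1 ≤ i → i ≤ N - 1 →
      X.mulVec (x (i + 1) v - x i v) =
        (h / 2) • ((M v).mulVec (x (i + 1) v) + b v + ((M v).mulVec (x i v) + b v)))
    (hinv : ∀ v : Fin m → ℝ, IsUnit (X - (h / 2) • M v).det)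
    (C : Matrix (Fin r) (Fin n) ℝ)
    (σ : Fin r → ℝ) (hσ : ∀ i, 0 < σ i)
    -- measurement indices `1 < θ(1) < ⋯ < θ(n_t) = N` with data `y^1, …, y^{n_t}`
    (θ : ℕ → ℕ) (hθ1 : 1 < θ 1)
    (hθmono : ∀ j j', 1 ≤ j → j < j' → j' ≤ nt → θ j < θ j') (hθN : θ nt = N)
    (y : ℕ → Fin r → ℝ)
    (J : (Fin m → ℝ) → ℝ)
    (hJ : ∀ v, J v = (1 / 2) * ∑ j ∈ Finset.Icc 1 nt,
      ∑ i, ((σ i)⁻¹ * (C.mulVec (x (θ j) v) - y j) i) ^ 2)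
    -- fix `v` and define the adjoint source terms `c^i`
    (v : Fin m → ℝ)
    (c : ℕ → Fin n → ℝ)
    (hc_meas : ∀ j, 1 ≤ j → j ≤ nt → c (θ j) =
      Cᵀ.mulVec ((Matrix.diagonal fun i => (σ i)⁻¹ ^ 2).mulVec
        (C.mulVec (x (θ j) v) - y j)))
    (hc_zero : ∀ i, (∀ j, 1 ≤ j → j ≤ nt → θ j ≠ i) → c i = 0)
    -- the backward adjoint recursion and final condition
    (p : ℕ → Fin n → ℝ)
    (hp_back : ∀ i, 2 ≤ i → i ≤ N - 1 →
      (X - (h / 2) • (M v)ᵀ).mulVec (p (i - 1)) =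
        (X + (h / 2) • (M v)ᵀ).mulVec (p i) - c i)
    (hp_final : (X - (h / 2) • (M v)ᵀ).mulVec (p (N - 1)) = -c N) :
    DifferentiableAt ℝ J v ∧
    ∀ w : Fin m → ℝ,
      fderiv ℝ J v w =
        -(h / 2) * ∑ i ∈ Finset.Icc 1 (N - 1), ∑ k,
          p i k *
            ((Matrix.of fun a b' => fderiv ℝ (fun v' => M v' a b') v w).mulVec (x (i + 1) v)
              + (Matrix.of fun a b' => fderiv ℝ (fun v' => M v' a b') v w).mulVec (x i v)
              + (2 : ℝ) • fderiv ℝ b v w) k := by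
  classical
  -- component differentiability
  have hxc : ∀ (i : ℕ) (k : Fin n), Differentiable ℝ (fun v' => x i v' k) := fun i k =>
    ((ContinuousLinearMap.proj k : ((Fin n) → ℝ) →L[ℝ] ℝ).differentiable).comp (hx i)
  have hbc : ∀ (k : Fin n), Differentiable ℝ (fun v' => b v' k) := fun k =>
    ((ContinuousLinearMap.proj k : ((Fin n) → ℝ) →L[ℝ] ℝ).differentiable).comp hb
  -- J as an explicit function
  have hJfun2 : J = fun v' => (1 / 2) * ∑ j ∈ Finset.Icc 1 nt,
      ∑ i, ((σ i)⁻¹ * ((∑ k, C i k * x (θ j) v' k) - y j i)) *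
        ((σ i)⁻¹ * ((∑ k, C i k * x (θ j) v' k) - y j i)) := by
    funext v'
    rw [hJ v']
    congr 1
    refine Finset.sum_congr rfl fun j _ => Finset.sum_congr rfl fun i _ => ?_
    rw [pow_two]
    simp [Matrix.mulVec, dotProduct]
  have hJdiff : Differentiable ℝ J := by
    rw [hJfun2]
    refine Differentiable.const_mul ?_ _
    refine Differentiable.fun_sum fun j _ => Differentiable.fun_sum fun i _ => ?_
    have hg : Differentiable ℝ (fun v' => (σ i)⁻¹ * ((∑ k, C i k * x (θ j) v' k) - y j i)) :=
      ((Differentiable.fun_sum fun k _ => (hxc _ k).const_mul _).sub_const _).const_mul _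
    exact hg.mul hg
  refine ⟨hJdiff v, fun w => ?_⟩
  -- directional derivatives of components
  set s : ℕ → Fin n → ℝ := fun i l => fderiv ℝ (fun v' => x i v' l) v w with hs_def
  set dM : Matrix (Fin n) (Fin n) ℝ :=
    Matrix.of fun a b' => fderiv ℝ (fun v' => M v' a b') v w with hdM_def
  set db : Fin n → ℝ := fun k => fderiv ℝ (fun v' => b v' k) v w with hdb_def
  have hdb_eq : fderiv ℝ b v w = db := by
    have : fderiv ℝ b v = ContinuousLinearMap.pi fun k => fderiv ℝ (fun v' => b v' k) v :=
      fderiv_pi (fun k => (hbc k) v)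
    rw [this]; ext k; rfl
  -- Step 1: derivative of J
  have hDJ : fderiv ℝ J v w = ∑ j ∈ Finset.Icc 1 nt,
      ∑ i, ((σ i)⁻¹ * ((∑ k, C i k * x (θ j) v k) - y j i)) *
        ((σ i)⁻¹ * (∑ k, C i k * s (θ j) k)) := by
    have hD : ∀ (j : ℕ) (i : Fin r), HasFDerivAt
        (fun v' => (σ i)⁻¹ * ((∑ k, C i k * x (θ j) v' k) - y j i))
        ((σ i)⁻¹ • (∑ k, C i k • (fderiv ℝ (fun v' => x (θ j) v' k) v))) v := by
      intro j i
      have hsum : HasFDerivAt (fun v' => ∑ k, C i k * x (θ j) v' k)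
          (∑ k, C i k • (fderiv ℝ (fun v' => x (θ j) v' k) v)) v :=
        HasFDerivAt.fun_sum fun k _ => (((hxc (θ j) k) v).hasFDerivAt).const_mul (C i k)
      exact (hsum.sub_const _).const_mul _
    have hJD : HasFDerivAt J ((1/2 : ℝ) • ∑ j ∈ Finset.Icc 1 nt, ∑ i,
        (((σ i)⁻¹ * ((∑ k, C i k * x (θ j) v k) - y j i)) •
            ((σ i)⁻¹ • ∑ k, C i k • fderiv ℝ (fun v' => x (θ j) v' k) v)
        + ((σ i)⁻¹ * ((∑ k, C i k * x (θ j) v k) - y j i)) •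
            ((σ i)⁻¹ • ∑ k, C i k • fderiv ℝ (fun v' => x (θ j) v' k) v))) v := by
      rw [hJfun2]
      exact ((HasFDerivAt.fun_sum fun j _ => HasFDerivAt.fun_sum fun i _ =>
        (hD j i).mul (hD j i))).const_mul _
    rw [hJD.fderiv]
    simp only [hs_def, ContinuousLinearMap.smul_apply, ContinuousLinearMap.coe_sum',
      Finset.sum_apply, ContinuousLinearMap.add_apply, smul_eq_mul]
    rw [Finset.mul_sum]
    refine Finset.sum_congr rfl fun j _ => ?_
    rw [Finset.mul_sum]
    refine Finset.sum_congr rfl fun i _ => ?_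
    ring
  -- Step 1b: rewrite as dot products with c
  have hdot : ∀ j ∈ Finset.Icc 1 nt,
      (∑ i, ((σ i)⁻¹ * ((∑ k, C i k * x (θ j) v k) - y j i)) *
        ((σ i)⁻¹ * (∑ k, C i k * s (θ j) k))) = c (θ j) ⬝ᵥ s (θ j) := by
    intro j hj
    simp only [Finset.mem_Icc] at hj
    rw [hc_meas j hj.1 hj.2, Matrix.mulVec_transpose, ← Matrix.dotProduct_mulVec]
    simp only [Matrix.mulVec, dotProduct, Matrix.diagonal_apply, Pi.sub_apply,
      ite_mul, zero_mul, Finset.sum_ite_eq, Finset.mem_univ, if_true]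
    refine Finset.sum_congr rfl fun i _ => ?_
    ring
  -- Step 2: reindex the sum over measurement indices
  have hsum2N : ∑ j ∈ Finset.Icc 1 nt, c (θ j) ⬝ᵥ s (θ j)
      = ∑ i ∈ Finset.Icc 2 N, c i ⬝ᵥ s i := by
    have hθgt : ∀ j, 1 ≤ j → j ≤ nt → 1 < θ j := by
      intro j h1 h2
      rcases lt_or_eq_of_le h1 with hlt | heq
      · exact lt_trans hθ1 (hθmono 1 j le_rfl hlt h2)
      · rw [← heq]; exact hθ1
    have hθle : ∀ j, 1 ≤ j → j ≤ nt → θ j ≤ N := by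
      intro j h1 h2
      rcases lt_or_eq_of_le h2 with hlt | heq
      · exact le_of_lt (hθN ▸ hθmono j nt h1 hlt le_rfl)
      · rw [heq, hθN]
    have hinj : ∀ j ∈ Finset.Icc 1 nt, ∀ j' ∈ Finset.Icc 1 nt, θ j = θ j' → j = j' := by
      intro j hj j' hj' he
      simp only [Finset.mem_Icc] at hj hj'
      by_contra hne
      rcases lt_or_gt_of_ne hne with hlt | hgt
      · exact absurd he (ne_of_lt (hθmono j j' hj.1 hlt hj'.2))
      · exact absurd he.symm (ne_of_lt (hθmono j' j hj'.1 hgt hj.2))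
    rw [← Finset.sum_image (f := fun i => c i ⬝ᵥ s i) (g := θ) hinj]
    refine Finset.sum_subset ?_ ?_
    · intro i hi
      simp only [Finset.mem_image, Finset.mem_Icc] at hi ⊢
      obtain ⟨j, hj, rfl⟩ := hi
      exact ⟨hθgt j hj.1 hj.2, hθle j hj.1 hj.2⟩
    · intro i hi hni
      have : c i = 0 := by
        refine hc_zero i fun j h1 h2 hne => hni ?_
        simp only [Finset.mem_image, Finset.mem_Icc]
        exact ⟨j, ⟨h1, h2⟩, hne⟩
      rw [this, zero_dotProduct]
  -- Step 3: s 1 = 0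
  have hs1 : s 1 = 0 := by
    funext l
    rw [hs_def]
    have : (fun v' => x 1 v' l) = fun _ => x 1 v l :=
      funext fun v' => congrFun (hx1 v' v) l
    simp [this]
  -- Step 4: differentiated scheme (forward sensitivity equation)
  set Am : Matrix (Fin n) (Fin n) ℝ := X - (h / 2) • M v with hAm_def
  set Ap : Matrix (Fin n) (Fin n) ℝ := X + (h / 2) • M v with hAp_def
  set g : ℕ → Fin n → ℝ := fun i =>
    dM.mulVec (x (i + 1) v) + dM.mulVec (x i v) + (2 : ℝ) • db with hg_def
  have hforward : ∀ i, 1 ≤ i → i ≤ N - 1 →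
      Am.mulVec (s (i + 1)) = Ap.mulVec (s i) + (h / 2) • g i := by
    intro i h1 h2
    funext k
    have hfun : (fun v' => ∑ l, X k l * (x (i+1) v' l - x i v' l))
        = (fun v' => (h/2) * ((∑ l, M v' k l * x (i+1) v' l) + b v' k
            + ((∑ l, M v' k l * x i v' l) + b v' k))) := by
      funext v'
      have h0 := congrFun (hscheme v' i h1 h2) k
      simpa [Matrix.mulVec, dotProduct] using h0
    have hL : HasFDerivAt (fun v' => ∑ l, X k l * (x (i+1) v' l - x i v' l))
        (∑ l, X k l • (fderiv ℝ (fun v' => x (i+1) v' l) v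
          - fderiv ℝ (fun v' => x i v' l) v)) v :=
      HasFDerivAt.fun_sum fun l _ =>
        ((((hxc (i+1) l) v).hasFDerivAt.sub ((hxc i l) v).hasFDerivAt)).const_mul (X k l)
    have hml : ∀ (jj : ℕ) (l : Fin n), HasFDerivAt (fun v' => M v' k l * x jj v' l)
        (M v k l • fderiv ℝ (fun v' => x jj v' l) v
          + x jj v l • fderiv ℝ (fun v' => M v' k l) v) v :=
      fun jj l => ((hM k l) v).hasFDerivAt.mul ((hxc jj l) v).hasFDerivAt
    have hbk : HasFDerivAt (fun v' => b v' k) (fderiv ℝ (fun v' => b v' k) v) v :=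
      ((hbc k) v).hasFDerivAt
    have hR : HasFDerivAt (fun v' => (h/2) * ((∑ l, M v' k l * x (i+1) v' l) + b v' k
            + ((∑ l, M v' k l * x i v' l) + b v' k)))
        ((h/2) • (((∑ l, (M v k l • fderiv ℝ (fun v' => x (i+1) v' l) v
              + x (i+1) v l • fderiv ℝ (fun v' => M v' k l) v)) + fderiv ℝ (fun v' => b v' k) v)
          + ((∑ l, (M v k l • fderiv ℝ (fun v' => x i v' l) v
              + x i v l • fderiv ℝ (fun v' => M v' k l) v)) + fderiv ℝ (fun v' => b v' k) v))) v :=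
      ((((HasFDerivAt.fun_sum fun l _ => hml (i+1) l).add hbk).add
        ((HasFDerivAt.fun_sum fun l _ => hml i l).add hbk))).const_mul _
    have hDeq : (∑ l, X k l • (fderiv ℝ (fun v' => x (i+1) v' l) v
          - fderiv ℝ (fun v' => x i v' l) v))
        = ((h/2) • (((∑ l, (M v k l • fderiv ℝ (fun v' => x (i+1) v' l) v
              + x (i+1) v l • fderiv ℝ (fun v' => M v' k l) v)) + fderiv ℝ (fun v' => b v' k) v)
          + ((∑ l, (M v k l • fderiv ℝ (fun v' => x i v' l) v
              + x i v l • fderiv ℝ (fun v' => M v' k l) v)) + fderiv ℝ (fun v' => b v' k) v))) := by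
      rw [← hL.fderiv, hfun, hR.fderiv]
    have hscal := congrFun (congrArg DFunLike.coe hDeq) w
    simp only [ContinuousLinearMap.coe_sum', Finset.sum_apply, ContinuousLinearMap.smul_apply,
      ContinuousLinearMap.add_apply, ContinuousLinearMap.sub_apply, smul_eq_mul] at hscal
    simp only [hAm_def, hAp_def, hg_def, hdM_def, hdb_def, hs_def, Matrix.mulVec,
      dotProduct, Matrix.sub_apply, Matrix.add_apply, Matrix.smul_apply, Pi.add_apply,
      Pi.smul_apply, smul_eq_mul, Matrix.of_apply, sub_mul, add_mul, mul_sub, mul_add,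
      Finset.sum_sub_distrib, Finset.sum_add_distrib] at hscal ⊢
    simp only [Finset.mul_sum, Finset.sum_mul] at hscal ⊢
    simp only [mul_comm, mul_left_comm, mul_assoc] at hscal ⊢
    linarith [hscal]
  -- transposes
  have hAmT : (X - (h / 2) • (M v)ᵀ) = Amᵀ := by
    rw [hAm_def, Matrix.transpose_sub, Matrix.transpose_smul, hX]
  have hApT : (X + (h / 2) • (M v)ᵀ) = Apᵀ := by
    rw [hAp_def, Matrix.transpose_add, Matrix.transpose_smul, hX]
  -- Step 5: telescoping
  set Φ : ℕ → ℝ := fun i => p i ⬝ᵥ Ap.mulVec (s i) with hΦ_def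
  set G : ℕ → ℝ := fun i => p i ⬝ᵥ g i with hG_def
  have key1 : ∀ i, 2 ≤ i → i ≤ N - 1 →
      c i ⬝ᵥ s i = Φ i - Φ (i - 1) - (h / 2) * G (i - 1) := by
    intro i hi2 hile
    have hstep := hforward (i - 1) (by omega) (by omega)
    rw [(by omega : i - 1 + 1 = i)] at hstep
    have hrec := hp_back i hi2 hile
    rw [hAmT, hApT] at hrec
    have hc : c i = Apᵀ.mulVec (p i) - Amᵀ.mulVec (p (i - 1)) := by
      rw [hrec]; abel
    rw [hc, sub_dotProduct, adjoint_pair_aux, adjoint_pair_aux, hstep,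
      dotProduct_add, dotProduct_smul]
    simp only [hΦ_def, hG_def, smul_eq_mul]
    ring
  have key2 : c N ⬝ᵥ s N = -Φ (N - 1) - (h / 2) * G (N - 1) := by
    have hstep := hforward (N - 1) (by omega) le_rfl
    rw [(by omega : N - 1 + 1 = N)] at hstep
    rw [hAmT] at hp_final
    have hc : c N = -(Amᵀ.mulVec (p (N - 1))) := by rw [hp_final, neg_neg]
    rw [hc, neg_dotProduct, adjoint_pair_aux, hstep,
      dotProduct_add, dotProduct_smul]
    simp only [hΦ_def, hG_def, smul_eq_mul]
    ring
  have hΦ1 : Φ 1 = 0 := by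
    rw [hΦ_def]; simp [hs1]
  have htele : ∑ i ∈ Finset.Icc 2 N, c i ⬝ᵥ s i
      = -(h / 2) * ∑ i ∈ Finset.Icc 1 (N - 1), G i := by
    have hN1 : N - 1 + 1 = N := by omega
    have hbody : ∀ i ∈ Finset.Icc 2 (N - 1), c i ⬝ᵥ s i
        = Φ i - Φ (i - 1) - (h / 2) * G (i - 1) := by
      intro i hi; simp only [Finset.mem_Icc] at hi; exact key1 i hi.1 hi.2
    have htel : ∑ i ∈ Finset.Icc 2 (N - 1), (Φ i - Φ (i - 1)) = Φ (N - 1) - Φ 1 :=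
      tele_sum_aux Φ 1 (N - 1) (by omega)
    have hrein : ∑ i ∈ Finset.Icc 2 (N - 1), G (i - 1)
        = ∑ i ∈ Finset.Icc 1 (N - 2), G i := by
      rw [← (by omega : N - 2 + 1 = N - 1)]
      exact shift_sum_aux G 1 (N - 2)
    have hlast : ∑ i ∈ Finset.Icc 1 (N - 1), G i
        = ∑ i ∈ Finset.Icc 1 (N - 2), G i + G (N - 1) := by
      rw [← (by omega : N - 2 + 1 = N - 1), Finset.sum_Icc_succ_top (by omega)]
    calc ∑ i ∈ Finset.Icc 2 N, c i ⬝ᵥ s i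
        = ∑ i ∈ Finset.Icc 2 (N - 1), c i ⬝ᵥ s i + c N ⬝ᵥ s N := by
          rw [← hN1, Finset.sum_Icc_succ_top (by omega), hN1]
      _ = (∑ i ∈ Finset.Icc 2 (N - 1), (Φ i - Φ (i - 1)))
            - (h / 2) * ∑ i ∈ Finset.Icc 2 (N - 1), G (i - 1)
            + (-Φ (N - 1) - (h / 2) * G (N - 1)) := by
          rw [Finset.sum_congr rfl hbody, key2, Finset.sum_sub_distrib, Finset.mul_sum]
      _ = -(h / 2) * ∑ i ∈ Finset.Icc 1 (N - 1), G i := by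
          rw [htel, hrein, hlast, hΦ1]; ring
  -- conclusion
  rw [hDJ, Finset.sum_congr rfl hdot, hsum2N, htele]
  congr 1
  refine Finset.sum_congr rfl fun i _ => ?_
  rw [hG_def, hg_def, hdb_eq]
  rfl
end
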